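/- For every integer k ≥ 1, a monomial π satisfies level-k difference conditions if and only if there exist monomials π⁽¹⁾, …, π⁽ᵏ⁾ with π = π⁽¹⁾ + ⋯ + π⁽ᵏ⁾ (multiset sum) such that each π⁽ʲ⁾ satisfies level-1 difference conditions. -/

import Mathlib

/-- A color `(i,j)`; the colors of `Γ` satisfy `1 ≤ i ≤ j ≤ ℓ`. -/
abbrev Color : Type := ℤ × ℤ

/-- A variable: the pair `((i,j), n)` represents the variable `x_{ij}(−n)`
with color `(i,j)` and degree `−n`. -/
abbrev Var : Type := Color × ℤ

/-- Membership of a color in the set of colors `Γ = {(i,j) : 1 ≤ i ≤ j ≤ ℓ}`. -/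
def inGamma (ℓ : ℕ) (c : Color) : Prop := 1 ≤ c.1 ∧ c.1 ≤ c.2 ∧ c.2 ≤ (ℓ : ℤ)

/-- Membership of a variable in the set of variables `Γ̃ = Γ × ℤ`. -/
def inVars (ℓ : ℕ) (v : Var) : Prop := inGamma ℓ v.1

/-- The relation `⊏` on variables: `x_{ij}(−n) ⊏ x_{i'j'}(−n')` iff
`n ≥ n' + 2`, or (`n = n' + 1` and `j > i'`), or
(`n = n'` and `i > i'` and `j > j'`). -/
def sqsub (x y : Var) : Prop :=
  y.2 + 2 ≤ x.2 ∨ (x.2 = y.2 + 1 ∧ y.1.1 < x.1.2) ∨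
    (x.2 = y.2 ∧ y.1.1 < x.1.1 ∧ y.1.2 < x.1.2)

/-- A diagonal path of colors: a list `(i₁,j₁), …, (i_t,j_t)` of colors of `Γ`
with `i₁ ≤ … ≤ i_t ≤ j_t ≤ … ≤ j₁` and consecutive colors distinct. -/
def DiagPath (ℓ : ℕ) (L : List Color) : Prop :=
  (∀ c ∈ L, inGamma ℓ c) ∧
    L.Chain' (fun a b => a.1 ≤ b.1 ∧ b.2 ≤ a.2 ∧ a ≠ b)

/-- A monomial `π` (a finite multiset of variables) satisfies the level-`k`
difference conditions (DC) if for every `n ∈ ℤ` and every pair of diagonal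
paths `L₁ = (i₁,j₁), …, (i_t,j_t)` and `L₂ = (i_{t+1},j_{t+1}), …, (i_s,j_s)`
with `j₁ ≤ i_{t+1}` and `(i_t,j_t) ≠ (i_{t+1},j_{t+1})`, the total
multiplicity in `π` of the variables `x_{i_p j_p}(−n−1)` for `1 ≤ p ≤ t`
together with the variables `x_{i_p j_p}(−n)` for `t+1 ≤ p ≤ s` is at
most `k`. -/
def DC (ℓ : ℕ) (k : ℕ) (π : Multiset Var) : Prop :=
  ∀ (n : ℤ) (L₁ L₂ : List Color),
    DiagPath ℓ L₁ → DiagPath ℓ L₂ →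
    (∀ c₁ ∈ L₁.head?, ∀ c₂ ∈ L₂.head?, c₁.2 ≤ c₂.1) →
    (∀ c₁ ∈ L₁.getLast?, ∀ c₂ ∈ L₂.head?, c₁ ≠ c₂) →
    (L₁.map (fun c => π.count (c, n + 1))).sum +
      (L₂.map (fun c => π.count (c, n))).sum ≤ k

/-- A monomial `π` satisfies the initial conditions (IC) for the dominant
weight `Λ = k₀Λ₀ + ⋯ + k_ℓΛ_ℓ` (encoded by `kc : ℕ → ℕ`, `kc r = k_r`) if for
every diagonal path `(i₁,j₁), …, (i_t,j_t)` the total multiplicity in `π` of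
the variables `x_{i_p j_p}(−1)`, `1 ≤ p ≤ t`, is at most
`k₀ + k₁ + ⋯ + k_{j₁−1}`. -/
def IC (ℓ : ℕ) (kc : ℕ → ℕ) (π : Multiset Var) : Prop :=
  ∀ L : List Color, DiagPath ℓ L →
    ∀ c ∈ L.head?,
      (L.map (fun c' => π.count (c', 1))).sum ≤ ∑ r ∈ Finset.range c.2.toNat, kc r

/-!
`sqsub' ℓ` is a strict order on variables. The variables counted by a single difference condition
are pairwise incomparable, and conversely every antichain of variables fits into one difference
condition. So a monomial satisfies the level-`k` conditions iff its antichains have at most `k`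
elements, and the level-`1` conditions iff it is a chain without repetitions. The theorem is then
Dilworth's theorem for this order on the multiset `π`, and Dilworth's theorem follows from Hall's
marriage theorem.
-/
open Finset Relation

section Dilworth

variable {α : Type*} [Fintype α] {r : α → α → Prop} {k : ℕ}

/-- Hall's theorem: every `x` can be matched to an element above it or to one of `k` spare
slots, since the elements of `s` lying above no element of `s` form an antichain. -/
theorem exists_injective_sum_of_antichain_card_le
    (hk : ∀ s : Finset α, IsAntichain r (s : Set α) → #s ≤ k) :
    ∃ f : α → α ⊕ Fin k, Function.Injective f ∧ ∀ x y, f x = .inl y → r x y := by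
  classical
  let up (x : α) : Finset α := {y | r x y}
  let t (x : α) : Finset (α ⊕ Fin k) := (up x).disjSum univ
  have hall (s : Finset α) : #s ≤ #(s.biUnion t) := by
    rcases s.eq_empty_or_nonempty with rfl | ⟨x₀, hx₀⟩
    · simp
    let N := s.biUnion up
    have hanti : IsAntichain r ((s \ N : Finset α) : Set α) := by
      intro x hx y hy _ hxy
      simp only [coe_sdiff, Set.mem_sdiff, mem_coe] at hx hy
      exact hy.2 (mem_biUnion.2 ⟨x, hx.1, by simpa [up] using hxy⟩)
    have hsub : N.disjSum univ ⊆ s.biUnion t := by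
      rintro (y | j) h
      · obtain ⟨x, hx, hy⟩ := mem_biUnion.1 (inl_mem_disjSum.1 h)
        exact mem_biUnion.2 ⟨x, hx, inl_mem_disjSum.2 hy⟩
      · exact mem_biUnion.2 ⟨x₀, hx₀, inr_mem_disjSum.2 (mem_univ j)⟩
    calc #s ≤ #(s \ N) + #N := card_le_card_sdiff_add_card
      _ ≤ k + #N := by gcongr; exact hk _ hanti
      _ = #(N.disjSum univ) := by simp [add_comm]
      _ ≤ _ := card_le_card hsub
  obtain ⟨f, hinj, hf⟩ := (all_card_le_biUnion_card_iff_exists_injective t).mp hall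
  exact ⟨f, hinj, fun x y hxy => by simpa [t, up, hxy] using hf x⟩

/-- Dilworth's theorem. The chains are the paths `x ↦ f x ↦ f (f x) ↦ ⋯` of the matching `f`
above; each ends in a spare slot, which is the color of its elements. -/
theorem exists_chain_coloring_of_antichain_card_le [IsTrans α r] [Std.Irrefl r]
    (hk : ∀ s : Finset α, IsAntichain r (s : Set α) → #s ≤ k) :
    ∃ c : α → Fin k, ∀ j, IsChain r {x | c x = j} := by
  obtain ⟨f, hinj, hf⟩ := exists_injective_sum_of_antichain_card_le hk
  let MatchedTo (a b : α) : Prop := f b = .inl a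
  have eq_or_lt {a b : α} (h : ReflTransGen MatchedTo a b) : b = a ∨ r b a := by
    induction h with
    | refl => exact .inl rfl
    | tail _ hbc ih => exact .inr (ih.elim (· ▸ hf _ _ hbc) (_root_.trans (hf _ _ hbc)))
  have exists_top (x : α) : ∃ t j, f t = .inr j ∧ ReflTransGen MatchedTo t x := by
    induction x using (Finite.wellFounded_of_trans_of_irrefl (Function.swap r)).induction with
    | _ x ih =>
      match hx : f x with
      | .inl y =>
        obtain ⟨t, j, ht, hty⟩ := ih y (hf x y hx)
        exact ⟨t, j, ht, hty.tail hx⟩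
      | .inr j => exact ⟨x, j, hx, .refl⟩
  choose t c ht hreach using exists_top
  refine ⟨c, fun j x hx y hy hxy => ?_⟩
  have htop : t x = t y := hinj <| by rw [ht, ht, show c x = c y from hx.trans hy.symm]
  have hunique : Relator.RightUnique MatchedTo := fun _ _ _ hb hc => hinj (hb.trans hc.symm)
  rcases (hreach x).total_of_right_unique hunique (htop ▸ hreach y) with h | h
  · exact .inr ((eq_or_lt h).resolve_left hxy.symm)
  · exact .inl ((eq_or_lt h).resolve_left hxy)

end Dilworth

theorem Multiset.exists_eq_sum_chains {β : Type*} (r : β → β → Prop) [IsTrans β r] [Std.Irrefl r]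
    (π : Multiset β) {k : ℕ} (hk : ∀ V ≤ π, (∀ v ∈ V, ∀ w ∈ V, ¬r v w) → card V ≤ k) :
    ∃ f : Fin k → Multiset β, π = ∑ j, f j ∧ ∀ j, (f j).Nodup ∧ IsChain r {v | v ∈ f j} := by
  classical
  let coe (x : π) : β := x
  obtain ⟨c, hc⟩ := exists_chain_coloring_of_antichain_card_le (r := InvImage r coe) (k := k)
    fun s hs => by
      have hV : s.val.map coe ≤ π :=
        (map_le_map (val_le_iff.2 (subset_univ s))).trans_eq (map_univ_coe π)
      simpa using hk _ hV <| by
        simp only [mem_map, mem_val]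
        rintro _ ⟨x, hx, rfl⟩ _ ⟨y, hy, rfl⟩
        obtain rfl | hxy := eq_or_ne x y
        exacts [irrefl (r := r) _, hs hx hy hxy]
  have comparable {x y : π} (hxy : c x = c y) (hne : x ≠ y) : r x y ∨ r y x :=
    hc (c y) hxy rfl hne
  refine ⟨fun j => ({x | c x = j} : Finset π).val.map coe, ?_, fun j => ⟨?_, ?_⟩⟩
  · conv_lhs => rw [← map_univ_coe π]
    simp_rw [← sum_multiset_singleton, ← sum_fiberwise univ c (fun x => ({x} : Multiset π))]
    exact map_sum (mapAddMonoidHom _) _ _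
  · refine Nodup.map_on (fun x hx y hy hxy => by_contra fun hne => ?_) (Finset.nodup _)
    simp only [Finset.mem_val, Finset.mem_filter, Finset.mem_univ, true_and] at hx hy
    have hxy : x.1 = y.1 := hxy
    rcases comparable (hx.trans hy.symm) hne with h | h <;> exact irrefl y.1 (hxy ▸ h)
  · simp only [mem_map, Finset.mem_val, Finset.mem_filter, Finset.mem_univ, true_and]
    rintro _ ⟨x, hx, rfl⟩ _ ⟨y, hy, rfl⟩ hxy
    exact comparable (hx.trans hy.symm) (ne_of_apply_ne _ hxy)

def corner (ℓ : ℕ) : Color := ((ℓ : ℤ), (ℓ : ℤ))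

/-- `⊏` together with `x_{ℓℓ}(−n−1) ⊏ x_{ℓℓ}(−n)`: with this extra relation two variables can
occur together in a difference condition exactly when they are incomparable. -/
def sqsub' (ℓ : ℕ) (x y : Var) : Prop :=
  sqsub x y ∨ (x.2 = y.2 + 1 ∧ x.1 = corner ℓ ∧ y.1 = corner ℓ)

instance (ℓ : ℕ) : IsStrictOrder Var (sqsub' ℓ) where
  irrefl x := by simp only [sqsub', sqsub, corner, Prod.ext_iff]; omega
  trans x y z := by simp only [sqsub', sqsub, corner, Prod.ext_iff]; omega

def Encloses (a b : Color) : Prop := a.1 ≤ b.1 ∧ b.2 ≤ a.2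

instance : Std.Refl Encloses := ⟨fun _ => ⟨le_rfl, le_rfl⟩⟩

section sqsub'

variable {ℓ : ℕ} {c d : Color} {m : ℤ}

theorem sqsub'_of_add_two_le {x y : Var} (h : y.2 + 2 ≤ x.2) : sqsub' ℓ x y := .inl (.inl h)

theorem not_sqsub'_same_iff :
    ¬sqsub' ℓ (c, m) (d, m) ∧ ¬sqsub' ℓ (d, m) (c, m) ↔ Encloses c d ∨ Encloses d c := by
  simp only [sqsub', sqsub, corner, Encloses, Prod.ext_iff, true_and]; omega

theorem not_sqsub'_succ_iff :
    ¬sqsub' ℓ (c, m + 1) (d, m) ↔ c.2 ≤ d.1 ∧ ¬(c = corner ℓ ∧ d = corner ℓ) := by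
  simp only [sqsub', sqsub, corner, Prod.ext_iff, true_and]; omega

theorem not_sqsub'_pred : ¬sqsub' ℓ (c, m) (d, m + 1) := by
  simp only [sqsub', sqsub, corner, Prod.ext_iff]; omega

end sqsub'

namespace DiagPath

variable {ℓ : ℕ} {L : List Color} {c d g h : Color}

theorem pairwise (hL : DiagPath ℓ L) : L.Pairwise fun a b => Encloses a b ∧ a ≠ b := by
  let R (a b : Color) : Prop := a.1 ≤ b.1 ∧ b.2 ≤ a.2 ∧ a ≠ b
  have : Trans R R R := ⟨by simp only [R, ne_eq, Prod.ext_iff]; omega⟩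
  exact (List.IsChain.pairwise (R := R) hL.2).imp fun h => ⟨⟨h.1, h.2.1⟩, h.2.2⟩

theorem nodup (hL : DiagPath ℓ L) : L.Nodup := hL.pairwise.imp And.right

theorem encloses_or_encloses (hL : DiagPath ℓ L) (hc : c ∈ L) (hd : d ∈ L) :
    Encloses c d ∨ Encloses d c := by
  let R (a b : Color) : Prop := Encloses a b ∨ Encloses b a
  have : Std.Symm R := ⟨fun _ _ => Or.symm⟩
  exact List.Pairwise.forall_of_forall (R := R) (fun a _ => .inl (refl a))
    (hL.pairwise.imp (.inl ·.1)) hc hd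

theorem encloses_of_mem_head? (hL : DiagPath ℓ L) (hc : c ∈ L) (hh : h ∈ L.head?) :
    Encloses h c := by
  obtain ⟨t, rfl⟩ : ∃ t, L = h :: t := by cases L <;> simp_all
  exact (hL.pairwise.imp And.left).rel_head hc

theorem encloses_of_mem_getLast? (hL : DiagPath ℓ L) (hc : c ∈ L) (hg : g ∈ L.getLast?) :
    Encloses c g := by
  rw [List.getLast?_eq_some_getLast (List.ne_nil_of_mem hc), Option.mem_some_iff] at hg
  exact hg ▸ (hL.pairwise.imp And.left).rel_getLast hc

theorem cons (hc : inGamma ℓ c) (hch : ∀ h ∈ L.head?, Encloses c h ∧ c ≠ h) (hL : DiagPath ℓ L) :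
    DiagPath ℓ (c :: L) := by
  refine ⟨List.forall_mem_cons.2 ⟨hc, hL.1⟩, List.isChain_cons.2 ⟨fun h hh => ?_, hL.2⟩⟩
  obtain ⟨⟨h1, h2⟩, h3⟩ := hch h hh
  exact ⟨h1, h2, h3⟩

end DiagPath

structure IsAdmissible (ℓ : ℕ) (L₁ L₂ : List Color) : Prop where
  diag₁ : DiagPath ℓ L₁
  diag₂ : DiagPath ℓ L₂
  head_le : ∀ c₁ ∈ L₁.head?, ∀ c₂ ∈ L₂.head?, c₁.2 ≤ c₂.1
  getLast_ne : ∀ c₁ ∈ L₁.getLast?, ∀ c₂ ∈ L₂.head?, c₁ ≠ c₂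

def dcVars (n : ℤ) (L₁ L₂ : List Color) : Finset Var :=
  (L₁.map (·, n + 1) ++ L₂.map (·, n)).toFinset

theorem dc_iff {ℓ k : ℕ} {π : Multiset Var} :
    DC ℓ k π ↔ ∀ n L₁ L₂, IsAdmissible ℓ L₁ L₂ → ∑ v ∈ dcVars n L₁ L₂, π.count v ≤ k := by
  have sum_dcVars (n : ℤ) (L₁ L₂ : List Color) (h₁ : DiagPath ℓ L₁) (h₂ : DiagPath ℓ L₂) :
      ∑ v ∈ dcVars n L₁ L₂, π.count v = (L₁.map fun c => π.count (c, n + 1)).sum +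
        (L₂.map fun c => π.count (c, n)).sum := by
    have hnodup : (L₁.map (·, n + 1) ++ L₂.map (·, n)).Nodup := by
      refine List.nodup_append.2 ⟨h₁.nodup.map fun _ _ h => congrArg Prod.fst h,
        h₂.nodup.map fun _ _ h => congrArg Prod.fst h, ?_⟩
      simp only [List.mem_map]
      rintro _ ⟨c, -, rfl⟩ _ ⟨d, -, rfl⟩ h
      simpa using congrArg Prod.snd h
    rw [dcVars, List.sum_toFinset _ hnodup]
    simp [Function.comp_def]
  refine ⟨fun h n L₁ L₂ hA => ?_, fun h n L₁ L₂ h₁ h₂ h₃ h₄ => ?_⟩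
  · exact (sum_dcVars n L₁ L₂ hA.1 hA.2).trans_le (h n L₁ L₂ hA.1 hA.2 hA.3 hA.4)
  · exact (sum_dcVars n L₁ L₂ h₁ h₂).symm.trans_le (h n L₁ L₂ ⟨h₁, h₂, h₃, h₄⟩)

namespace IsAdmissible

variable {ℓ : ℕ} {L₁ L₂ : List Color} {c d : Color}

theorem snd_le_fst (hA : IsAdmissible ℓ L₁ L₂) (hc : c ∈ L₁) (hd : d ∈ L₂) : c.2 ≤ d.1 := by
  obtain ⟨h₁, hh₁⟩ : ∃ h, h ∈ L₁.head? := ⟨_, List.head?_eq_some_head (List.ne_nil_of_mem hc)⟩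
  obtain ⟨h₂, hh₂⟩ : ∃ h, h ∈ L₂.head? := ⟨_, List.head?_eq_some_head (List.ne_nil_of_mem hd)⟩
  have := hA.head_le h₁ hh₁ h₂ hh₂
  have := hA.diag₁.encloses_of_mem_head? hc hh₁
  have := hA.diag₂.encloses_of_mem_head? hd hh₂
  simp only [Encloses] at *
  omega

theorem not_corner (hA : IsAdmissible ℓ L₁ L₂) (hc : c ∈ L₁) (hd : d ∈ L₂) :
    ¬(c = corner ℓ ∧ d = corner ℓ) := by
  rintro ⟨rfl, rfl⟩
  obtain ⟨g, hg⟩ : ∃ g, g ∈ L₁.getLast? :=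
    ⟨_, List.getLast?_eq_some_getLast (List.ne_nil_of_mem hc)⟩
  obtain ⟨h, hh⟩ : ∃ h, h ∈ L₂.head? := ⟨_, List.head?_eq_some_head (List.ne_nil_of_mem hd)⟩
  have hg_mem := List.mem_of_mem_getLast? hg
  have hh_mem := List.mem_of_mem_head? hh
  have := hA.diag₁.1 g hg_mem
  have := hA.diag₂.1 h hh_mem
  have := hA.diag₁.encloses_of_mem_getLast? hc hg
  have := hA.diag₂.encloses_of_mem_head? hd hh
  have := hA.snd_le_fst hc hh_mem
  refine hA.getLast_ne g hg h hh ?_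
  simp only [inGamma, Encloses, corner, Prod.ext_iff] at *
  omega

theorem not_sqsub' (hA : IsAdmissible ℓ L₁ L₂) {n : ℤ} {v w : Var} (hv : v ∈ dcVars n L₁ L₂)
    (hw : w ∈ dcVars n L₁ L₂) : ¬sqsub' ℓ v w := by
  simp only [dcVars, List.mem_toFinset, List.mem_append, List.mem_map] at hv hw
  rcases hv with ⟨c, hc, rfl⟩ | ⟨c, hc, rfl⟩ <;> rcases hw with ⟨d, hd, rfl⟩ | ⟨d, hd, rfl⟩
  · exact (not_sqsub'_same_iff.2 (hA.diag₁.encloses_or_encloses hc hd)).1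
  · exact not_sqsub'_succ_iff.2 ⟨hA.snd_le_fst hc hd, hA.not_corner hc hd⟩
  · exact not_sqsub'_pred
  · exact (not_sqsub'_same_iff.2 (hA.diag₂.encloses_or_encloses hc hd)).1

end IsAdmissible

def diagLE (c d : Color) : Prop := c.1 < d.1 ∨ (c.1 = d.1 ∧ d.2 ≤ c.2)

instance : DecidableRel diagLE := fun _ _ => by unfold diagLE; infer_instance
instance : IsTrans Color diagLE := ⟨by simp only [diagLE]; omega⟩
instance : Std.Antisymm diagLE := ⟨by simp only [diagLE, Prod.ext_iff]; omega⟩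
instance : Std.Total diagLE := ⟨by simp only [diagLE]; omega⟩

theorem diagPath_sort {ℓ : ℕ} {S : Finset Color} (hS : ∀ c ∈ S, inGamma ℓ c)
    (hnest : ∀ c ∈ S, ∀ d ∈ S, Encloses c d ∨ Encloses d c) : DiagPath ℓ (S.sort diagLE) := by
  refine ⟨fun c hc => hS c ((mem_sort _).1 hc), List.Pairwise.isChain ?_⟩
  refine ((S.pairwise_sort diagLE).and (S.sort_nodup diagLE)).imp_of_mem fun ha hb hab => ?_
  have := hnest _ ((mem_sort _).1 ha) _ ((mem_sort _).1 hb)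
  simp only [diagLE, Encloses] at hab this
  exact ⟨by omega, by omega, hab.2⟩

theorem exists_isAdmissible_of_snd_le_fst {ℓ : ℕ} {L₁ L₂ : List Color} (h₁ : DiagPath ℓ L₁)
    (h₂ : DiagPath ℓ L₂) (hcross : ∀ c ∈ L₁, ∀ d ∈ L₂,
      c.2 ≤ d.1 ∧ ¬(c = corner ℓ ∧ d = corner ℓ)) :
    ∃ L₂', IsAdmissible ℓ L₁ L₂' ∧ L₂ ⊆ L₂' := by
  by_cases hg : ∃ g ∈ L₁.getLast?, g ∈ L₂.head?
  · -- then `g = (a, a)` with `a < ℓ`, and `(a, a + 1)` can be put in front of `L₂`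
    obtain ⟨g, hg₁, hg₂⟩ := hg
    have hgg := hcross g (List.mem_of_mem_getLast? hg₁) g (List.mem_of_mem_head? hg₂)
    have hγ := h₁.1 g (List.mem_of_mem_getLast? hg₁)
    simp only [inGamma, corner, Prod.ext_iff] at hgg hγ
    refine ⟨(g.1, g.2 + 1) :: L₂, ⟨h₁, h₂.cons ?_ ?_, ?_, ?_⟩, List.subset_cons_self _ _⟩
    · simp only [inGamma]; omega
    · intro h hh
      obtain rfl := Option.mem_unique hh hg₂
      simp [Encloses, Prod.ext_iff]
    · intro c hc c' hc'
      obtain rfl : c' = (g.1, g.2 + 1) := by simpa using hc'.symm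
      exact (hcross c (List.mem_of_mem_head? hc) g (List.mem_of_mem_head? hg₂)).1
    · intro c hc c' hc'
      obtain rfl := Option.mem_unique hc hg₁
      obtain rfl : c' = (c.1, c.2 + 1) := by simpa using hc'.symm
      simp [Prod.ext_iff]
  · simp only [not_exists, not_and] at hg
    refine ⟨L₂, ⟨h₁, h₂, fun c hc d hd => ?_, fun c hc d hd hcd => hg c hc (hcd ▸ hd)⟩,
      List.Subset.refl _⟩
    exact (hcross c (List.mem_of_mem_head? hc) d (List.mem_of_mem_head? hd)).1

theorem exists_isAdmissible_of_antichain {ℓ : ℕ} {T : Finset Var} (hT : ∀ v ∈ T, inVars ℓ v)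
    (hanti : ∀ v ∈ T, ∀ w ∈ T, ¬sqsub' ℓ v w) :
    ∃ n L₁ L₂, IsAdmissible ℓ L₁ L₂ ∧ T ⊆ dcVars n L₁ L₂ := by
  rcases T.eq_empty_or_nonempty with rfl | hne
  · exact ⟨0, [], [], ⟨⟨by simp, .nil⟩, ⟨by simp, .nil⟩, by simp, by simp⟩, empty_subset _⟩
  obtain ⟨v₀, hv₀, hmin⟩ := T.exists_min_image Prod.snd hne
  have hdeg (v) (hv : v ∈ T) : v.2 = v₀.2 ∨ v.2 = v₀.2 + 1 := by
    have := hmin v hv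
    have := mt sqsub'_of_add_two_le (hanti v hv v₀ hv₀)
    omega
  let colorsAt (m : ℤ) : Finset Color := {v ∈ T | v.2 = m}.image Prod.fst
  have mem_colorsAt {c : Color} {m : ℤ} : c ∈ colorsAt m ↔ (c, m) ∈ T := by simp [colorsAt]
  have diag (m : ℤ) : DiagPath ℓ ((colorsAt m).sort diagLE) :=
    diagPath_sort (fun c hc => hT _ (mem_colorsAt.1 hc)) fun c hc d hd =>
      not_sqsub'_same_iff.1 ⟨hanti _ (mem_colorsAt.1 hc) _ (mem_colorsAt.1 hd),
        hanti _ (mem_colorsAt.1 hd) _ (mem_colorsAt.1 hc)⟩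
  obtain ⟨L₂, hA, hL₂⟩ := exists_isAdmissible_of_snd_le_fst (diag (v₀.2 + 1)) (diag v₀.2)
    fun c hc d hd => not_sqsub'_succ_iff.1 <|
      hanti _ (mem_colorsAt.1 ((mem_sort _).1 hc)) _ (mem_colorsAt.1 ((mem_sort _).1 hd))
  refine ⟨v₀.2, _, L₂, hA, fun v hv => ?_⟩
  simp only [dcVars, List.mem_toFinset, List.mem_append, List.mem_map]
  rcases hdeg v hv with h | h
  · exact .inr ⟨v.1, hL₂ ((mem_sort _).2 (mem_colorsAt.2 (h ▸ hv))), by rw [← h]⟩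
  · exact .inl ⟨v.1, (mem_sort _).2 (mem_colorsAt.2 (h ▸ hv)), by rw [← h]⟩

theorem dc_one_of_isChain {ℓ : ℕ} {σ : Multiset Var} (hσ : σ.Nodup)
    (hchain : IsChain (sqsub' ℓ) {v | v ∈ σ}) : DC ℓ 1 σ := by
  refine dc_iff.2 fun n L₁ L₂ hA => ?_
  simp_rw [Multiset.count_eq_of_nodup hσ, sum_boole, Nat.cast_id]
  refine card_le_one.2 fun v hv w hw => ?_
  simp only [mem_filter] at hv hw
  by_contra hvw
  rcases hchain hv.2 hw.2 hvw with h | h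
  exacts [hA.not_sqsub' hv.1 hw.1 h, hA.not_sqsub' hw.1 hv.1 h]

theorem card_le_of_dc {ℓ k : ℕ} {π V : Multiset Var} (hDC : DC ℓ k π)
    (hπ : ∀ v ∈ π, inVars ℓ v) (hV : V ≤ π) (hanti : ∀ v ∈ V, ∀ w ∈ V, ¬sqsub' ℓ v w) :
    Multiset.card V ≤ k := by
  obtain ⟨n, L₁, L₂, hA, hsub⟩ := exists_isAdmissible_of_antichain (T := V.toFinset)
    (fun v hv => hπ v (Multiset.mem_of_le hV (Multiset.mem_toFinset.1 hv))) (by simpa using hanti)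
  calc Multiset.card V = ∑ v ∈ dcVars n L₁ L₂, V.count v :=
        (Multiset.sum_count_eq_card fun v hv => hsub (Multiset.mem_toFinset.2 hv)).symm
    _ ≤ ∑ v ∈ dcVars n L₁ L₂, π.count v := sum_le_sum fun v _ => Multiset.count_le_of_le v hV
    _ ≤ k := dc_iff.1 hDC n L₁ L₂ hA

theorem dc_sum {ℓ : ℕ} {ι : Type*} (s : Finset ι) (k : ι → ℕ) (f : ι → Multiset Var)
    (h : ∀ i ∈ s, DC ℓ (k i) (f i)) : DC ℓ (∑ i ∈ s, k i) (∑ i ∈ s, f i) := by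
  refine dc_iff.2 fun n L₁ L₂ hA => ?_
  simp_rw [Multiset.count_sum']
  rw [sum_comm]
  exact sum_le_sum fun i hi => dc_iff.1 (h i hi) n L₁ L₂ hA

theorem stmt13_general (ℓ k : ℕ) (π : Multiset Var)
    (hπ : ∀ v ∈ π, inVars ℓ v) :
    DC ℓ k π ↔
      ∃ f : Fin k → Multiset Var, π = ∑ j, f j ∧ ∀ j, DC ℓ 1 (f j) := by
  constructor
  · intro h
    obtain ⟨f, hsum, hf⟩ := Multiset.exists_eq_sum_chains (sqsub' ℓ) π fun _ => card_le_of_dc h hπ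
    exact ⟨f, hsum, fun j => dc_one_of_isChain (hf j).1 (hf j).2⟩
  · rintro ⟨f, rfl, hf⟩
    simpa using dc_sum univ (fun _ => 1) f fun j _ => hf j

/-- A monomial `π` satisfies the level-`k` difference conditions if and only
if it can be written as a multiset sum `π = π⁽¹⁾ + ⋯ + π⁽ᵏ⁾` where each
`π⁽ʲ⁾` satisfies the level-1 difference conditions. -/
theorem stmt13 (ℓ k : ℕ) (hk : 1 ≤ k) (π : Multiset Var)
    (hπ : ∀ v ∈ π, inVars ℓ v) :
    DC ℓ k π ↔
      ∃ f : Fin k → Multiset Var, π = ∑ j, f j ∧ ∀ j, DC ℓ 1 (f j) :=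
  stmt13_general ℓ k π hπ
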